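/- arXiv:2211.06908 — 5 statements merged into one kernel-verified Lean document; each statement's English description precedes it below -/
import Mathlib

section
/- Let r_R > 0, λ > 0, θ₀ ∈ ℝ, and t₁ < t₂ with (t₂ − t₁)/r_R < 2π. Let β : ℝ → ℝ be continuously differentiable with β(t₁) = β(t₂) = 0, β(t) > 0 for all t ∈ (t₁, t₂), β'(t) = λ·sin(θ₀ − (t − t₁)/r_R) for all t ∈ [t₁, t₂], and (β(t)/r_R)² + (β'(t))² = λ² for all t ∈ (t₁, t₂). Then (t₂ − t₁)/r_R = π. -/
open Real Set

/-!
On `(t₁, t₂)` the point `(β / r_R, β')` stays on the circle of radius `λ`; by continuity it is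
there at the endpoints too, where `β = 0`, so `β' = ±λ`. Since `β` rises from `0` at `t₁` and falls
back to `0` at `t₂`, in fact `β'(t₁) = λ` and `β'(t₂) = -λ`, i.e. `sin θ₀ = 1` and
`sin (θ₀ - Δ) = -1` for the angle `Δ = (t₂ - t₁) / r_R`. Then `cos Δ = -1`, and `0 < Δ < 2π`
forces `Δ = π`.
-/

theorem deriv_nonneg_of_forall_Ioo_le_left {f : ℝ → ℝ} {a b : ℝ} (hab : a < b)
    (hf : DifferentiableAt ℝ f a) (hle : ∀ t ∈ Ioo a b, f a ≤ f t) : 0 ≤ deriv f a := by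
  have := left_nhdsWithin_Ioo_neBot hab
  refine ge_of_tendsto ((hasDerivAt_iff_tendsto_slope.mp hf.hasDerivAt).mono_left
    (nhdsWithin_mono _ fun t (ht : t ∈ Ioo a b) => ht.1.ne')) ?_
  filter_upwards [self_mem_nhdsWithin] with t ht
  rw [slope_def_field]
  exact div_nonneg (sub_nonneg.mpr (hle t ht)) (sub_nonneg.mpr ht.1.le)

theorem deriv_nonpos_of_forall_Ioo_le_right {f : ℝ → ℝ} {a b : ℝ} (hab : a < b)
    (hf : DifferentiableAt ℝ f b) (hle : ∀ t ∈ Ioo a b, f b ≤ f t) : deriv f b ≤ 0 := by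
  have := right_nhdsWithin_Ioo_neBot hab
  refine le_of_tendsto ((hasDerivAt_iff_tendsto_slope.mp hf.hasDerivAt).mono_left
    (nhdsWithin_mono _ fun t (ht : t ∈ Ioo a b) => ht.2.ne)) ?_
  filter_upwards [self_mem_nhdsWithin] with t ht
  rw [slope_def_field]
  exact div_nonpos_of_nonneg_of_nonpos (sub_nonneg.mpr (hle t ht)) (sub_nonpos.mpr ht.2.le)

theorem Real.eq_pi_of_sin_eq_one_of_sin_sub_eq_neg_one {θ Δ : ℝ} (h₁ : sin θ = 1)
    (h₂ : sin (θ - Δ) = -1) (hΔ₀ : 0 < Δ) (hΔ : Δ < 2 * π) : Δ = π := by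
  have hcosθ : cos θ = 0 := by nlinarith [sin_sq_add_cos_sq θ]
  have hcosΔ : cos (Δ - π) = 1 := by
    rw [sin_sub, h₁, hcosθ] at h₂
    rw [cos_sub_pi]
    linarith
  have := (cos_eq_one_iff_of_lt_of_lt (by linarith [pi_pos]) (by linarith [pi_pos])).mp hcosΔ
  linarith

/-- For the abnormal multiplier `e = 0`, the middle right-turn arc of an `LRL`
path in the weighted Markov-Dubins problem has angle exactly `π`. -/
theorem middle_arc_angle_eq_pi
    (rR lam θ₀ t₁ t₂ : ℝ) (β : ℝ → ℝ)
    (hrR : 0 < rR) (hlam : 0 < lam)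
    (ht : t₁ < t₂) (hlt : (t₂ - t₁) / rR < 2 * π)
    (hβC1 : ContDiff ℝ 1 β)
    (hβ₁ : β t₁ = 0) (hβ₂ : β t₂ = 0)
    (hβpos : ∀ t ∈ Set.Ioo t₁ t₂, 0 < β t)
    (hderiv : ∀ t ∈ Set.Icc t₁ t₂, deriv β t = lam * Real.sin (θ₀ - (t - t₁) / rR))
    (hellipse : ∀ t ∈ Set.Ioo t₁ t₂, (β t / rR) ^ 2 + (deriv β t) ^ 2 = lam ^ 2) :
    (t₂ - t₁) / rR = π := by
  have hcircle : EqOn (fun t => (β t / rR) ^ 2 + deriv β t ^ 2) (fun _ => lam ^ 2) (Icc t₁ t₂) := by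
    rw [← closure_Ioo ht.ne]
    have := hβC1.continuous_deriv le_rfl
    exact EqOn.closure hellipse (by fun_prop) continuous_const
  have hdiff : Differentiable ℝ β := hβC1.differentiable one_ne_zero
  have hd₁ : deriv β t₁ = lam := by
    refine (sq_eq_sq₀ ?_ hlam.le).mp (by simpa [hβ₁] using hcircle (left_mem_Icc.mpr ht.le))
    exact deriv_nonneg_of_forall_Ioo_le_left ht (hdiff t₁) fun t h => hβ₁ ▸ (hβpos t h).le
  have hd₂ : -deriv β t₂ = lam := by
    refine (sq_eq_sq₀ ?_ hlam.le).mp (by simpa [hβ₂] using hcircle (right_mem_Icc.mpr ht.le))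
    exact neg_nonneg.mpr <|
      deriv_nonpos_of_forall_Ioo_le_right ht (hdiff t₂) fun t h => hβ₂ ▸ (hβpos t h).le
  have hsin₁ : sin θ₀ = 1 := by
    have := hderiv t₁ (left_mem_Icc.mpr ht.le)
    simp only [sub_self, zero_div, sub_zero] at this
    exact mul_left_cancel₀ hlam.ne' (by linarith)
  have hsin₂ : sin (θ₀ - (t₂ - t₁) / rR) = -1 := by
    have := hderiv t₂ (right_mem_Icc.mpr ht.le)
    exact mul_left_cancel₀ hlam.ne' (by linarith)
  exact eq_pi_of_sin_eq_one_of_sin_sub_eq_neg_one hsin₁ hsin₂ (div_pos (by linarith) hrR) hlt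
end

section
/- Let μ_L, μ_R ≥ 0 with μ_L + μ_R > 0, and let β : ℝ → ℝ be differentiable such that for every t with −μ_L ≤ β(t) ≤ μ_R one has β'(t) = 0. If β(0) ≤ −μ_L, then β(t) ≤ −μ_L for all t ≥ 0. -/
open Real

/-- For `λ = e = 1`, where `β' = 0` whenever `−μ_L ≤ β ≤ μ_R`, the region
`β ≤ −μ_L` is (forward-)invariant. -/
theorem beta_region_invariance_lambda_eq_one
    (μL μR : ℝ) (β : ℝ → ℝ)
    (hμL : 0 ≤ μL) (hμR : 0 ≤ μR) (hμ : 0 < μL + μR)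
    (hdiff : Differentiable ℝ β)
    (hphase : ∀ t, -μL ≤ β t → β t ≤ μR → deriv β t = 0)
    (h0 : β 0 ≤ -μL) :
    ∀ t ≥ 0, β t ≤ -μL := by
  intro t₀ ht₀
  by_contra hcon
  push_neg at hcon
  have hβc : Continuous β := hdiff.continuous
  set ε : ℝ := min (β t₀ + μL) (μL + μR) / 2 with hε
  have hεpos : 0 < ε := by
    apply div_pos _ (by norm_num)
    exact lt_min (by linarith) hμ
  set L : ℝ := -μL + ε with hL
  have hLlt : L < β t₀ := by
    have : ε ≤ (β t₀ + μL) / 2 := by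
      apply div_le_div_of_nonneg_right (min_le_left _ _) (by norm_num)
    linarith
  have hLμR : L < μR := by
    have : ε ≤ (μL + μR) / 2 := by
      apply div_le_div_of_nonneg_right (min_le_right _ _) (by norm_num)
    linarith
  have hLgt : -μL < L := by linarith
  -- s = last time in [0, t₀] with β ≤ -μL
  set S : Set ℝ := {t | t ∈ Set.Icc 0 t₀ ∧ β t ≤ -μL} with hS
  have hSclosed : IsClosed S := by
    exact (isClosed_Icc.inter (isClosed_le hβc continuous_const) : _)
  have hSne : S.Nonempty := ⟨0, ⟨le_refl 0, ht₀⟩, h0⟩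
  have hSbdd : BddAbove S := ⟨t₀, fun x hx => hx.1.2⟩
  set s : ℝ := sSup S with hs
  have hsS : s ∈ S := hSclosed.csSup_mem hSne hSbdd
  have hs0 : 0 ≤ s := hsS.1.1
  have hst₀ : s ≤ t₀ := hsS.1.2
  have hβs : β s ≤ -μL := hsS.2
  have hgt : ∀ x, s < x → x ≤ t₀ → -μL < β x := by
    intro x hsx hxt
    by_contra h
    push_neg at h
    have : x ∈ S := ⟨⟨le_trans hs0 hsx.le, hxt⟩, h⟩
    exact absurd (le_csSup hSbdd this) (not_le.mpr hsx)
  -- u = first time in [s, t₀] with β ≥ L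
  set U : Set ℝ := {t | t ∈ Set.Icc s t₀ ∧ L ≤ β t} with hU
  have hUclosed : IsClosed U := by
    exact (isClosed_Icc.inter (isClosed_le continuous_const hβc) : _)
  have hUne : U.Nonempty := ⟨t₀, ⟨hst₀, le_refl _⟩, hLlt.le⟩
  have hUbdd : BddBelow U := ⟨s, fun x hx => hx.1.1⟩
  set u : ℝ := sInf U with hu
  have huU : u ∈ U := hUclosed.csInf_mem hUne hUbdd
  have hsu : s ≤ u := huU.1.1
  have hut₀ : u ≤ t₀ := huU.1.2
  have hβu : L ≤ β u := huU.2
  have hlt : ∀ x, s ≤ x → x < u → β x < L := by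
    intro x hsx hxu
    by_contra h
    push_neg at h
    have hxt : x ≤ t₀ := le_trans hxu.le hut₀
    have : x ∈ U := ⟨⟨hsx, hxt⟩, h⟩
    exact absurd (csInf_le hUbdd this) (not_le.mpr hxu)
  have hsu' : s < u := by
    rcases lt_or_eq_of_le hsu with h | h
    · exact h
    · exfalso; rw [← h] at hβu; linarith
  -- MVT on [s, u]
  obtain ⟨c, hc, hderiv⟩ := exists_deriv_eq_slope β hsu'
    (hβc.continuousOn) (hdiff.differentiableOn)
  have hc1 : -μL ≤ β c := (hgt c hc.1 (le_trans hc.2.le hut₀)).le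
  have hc2 : β c ≤ μR := le_of_lt (lt_trans (hlt c hc.1.le hc.2) hLμR)
  have hz : deriv β c = 0 := hphase c hc1 hc2
  rw [hz] at hderiv
  have hne : (u - s) ≠ 0 := sub_ne_zero.mpr (ne_of_gt hsu')
  have : β u - β s = 0 := by
    rcases div_eq_zero_iff.mp hderiv.symm with h | h
    · exact h
    · exact absurd h hne
  linarith
end

section
/- Let λ > 1, r_L > 0, μ_L ≥ 0, and θ₀ ∈ ℝ. Define β : ℝ → ℝ by β(t) = −r_L − μ_L − λ·r_L·cos(θ₀ + t/r_L). Suppose t₁ < t₂ satisfy β(t₁) = β(t₂) = −μ_L, β'(t₁) = −√(λ² − 1), β'(t₂) = √(λ² − 1), and (t₂ − t₁)/r_L < 2π. Then (t₂ − t₁)/r_L = 2π − 2·arccos(1/λ). -/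
open Real

/-!
Write `x t = θ₀ + t / r_L` and `a = arccos (1/λ)`. Since `β' = λ sin x`, the two boundary
conditions say that `(cos x, sin x)` equals `(-cos a, -sin a)` at `t₁` and `(-cos a, sin a)`
at `t₂`. Hence `x t₂ - x t₁` has the same cosine and sine as `2π - 2a`; both angles lie in
`(0, 2π)`, so they are equal.
-/

theorem eq_of_cos_eq_of_sin_eq {x y : ℝ} (hlo : -(2 * π) < x - y) (hhi : x - y < 2 * π)
    (hc : cos x = cos y) (hs : sin x = sin y) : x = y := by
  have hcos : cos (x - y) = 1 := by
    rw [cos_sub, hc, hs, ← sq, ← sq, cos_sq_add_sin_sq]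
  exact sub_eq_zero.mp ((cos_eq_one_iff_of_lt_of_lt hlo hhi).mp hcos)

theorem sub_eq_two_pi_sub_two_mul {x₁ x₂ a : ℝ}
    (hc₁ : cos x₁ = -cos a) (hs₁ : sin x₁ = -sin a)
    (hc₂ : cos x₂ = -cos a) (hs₂ : sin x₂ = sin a)
    (ha₀ : 0 ≤ a) (haπ : a ≤ π) (hpos : 0 < x₂ - x₁) (hlt : x₂ - x₁ < 2 * π) :
    x₂ - x₁ = 2 * π - 2 * a := by
  apply eq_of_cos_eq_of_sin_eq (by linarith) (by linarith)
  · rw [cos_sub, cos_two_pi_sub, cos_two_mul, hc₁, hc₂, hs₁, hs₂]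
    linear_combination -sin_sq_add_cos_sq a
  · rw [sin_sub, sin_two_pi_sub, sin_two_mul, hc₁, hc₂, hs₁, hs₂]
    ring

theorem sin_arccos_inv {lam : ℝ} (hlam : 0 < lam) :
    sin (arccos (1 / lam)) = √(lam ^ 2 - 1) / lam := by
  rw [sin_arccos, show 1 - (1 / lam) ^ 2 = (lam ^ 2 - 1) / lam ^ 2 by field_simp,
    sqrt_div' _ (sq_nonneg lam), sqrt_sq hlam.le]

section Adjoint

variable {lam rL μL θ₀ : ℝ} {β : ℝ → ℝ}

theorem deriv_eq_mul_sin (hrL : rL ≠ 0)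
    (hβ : ∀ t, β t = -rL - μL - lam * rL * cos (θ₀ + t / rL)) (t : ℝ) :
    deriv β t = lam * sin (θ₀ + t / rL) := by
  have hx : HasDerivAt (fun t : ℝ => θ₀ + t / rL) (1 / rL) t := by
    simpa using ((hasDerivAt_id t).div_const rL).const_add θ₀
  rw [funext hβ, ((hx.cos.const_mul (lam * rL)).const_sub (-rL - μL)).deriv]
  field_simp

theorem cos_eq_neg_one_div_of_eq_neg (hlam : lam ≠ 0) (hrL : rL ≠ 0)
    (hβ : ∀ t, β t = -rL - μL - lam * rL * cos (θ₀ + t / rL)) {t : ℝ} (ht : β t = -μL) :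
    cos (θ₀ + t / rL) = -(1 / lam) := by
  have h : rL * (cos (θ₀ + t / rL) * lam) = rL * -1 := by linear_combination hβ t - ht
  rw [← neg_div, eq_div_iff hlam]
  exact mul_left_cancel₀ hrL h

end Adjoint

theorem SLS_left_turn_angle_general
    (lam rL μL θ₀ t₁ t₂ : ℝ) (β : ℝ → ℝ)
    (hlam : 1 < lam) (hrL : 0 < rL)
    (hβ : ∀ t, β t = -rL - μL - lam * rL * Real.cos (θ₀ + t / rL))
    (ht : t₁ < t₂)
    (hβ₁ : β t₁ = -μL) (hβ₂ : β t₂ = -μL)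
    (hd₁ : deriv β t₁ = -Real.sqrt (lam ^ 2 - 1))
    (hd₂ : deriv β t₂ = Real.sqrt (lam ^ 2 - 1))
    (hlt : (t₂ - t₁) / rL < 2 * π) :
    (t₂ - t₁) / rL = 2 * π - 2 * Real.arccos (1 / lam) := by
  have hlam₀ : 0 < lam := one_pos.trans hlam
  set a := arccos (1 / lam)
  have hca : cos a = 1 / lam :=
    cos_arccos (by linarith [one_div_pos.mpr hlam₀]) ((div_lt_one hlam₀).mpr hlam).le
  have hsa : sin a = √(lam ^ 2 - 1) / lam := sin_arccos_inv hlam₀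
  have hsin : ∀ t, sin (θ₀ + t / rL) = deriv β t / lam := fun t => by
    rw [deriv_eq_mul_sin hrL.ne' hβ, mul_div_cancel_left₀ _ hlam₀.ne']
  have hw : (t₂ - t₁) / rL = (θ₀ + t₂ / rL) - (θ₀ + t₁ / rL) := by ring
  rw [hw] at hlt ⊢
  refine sub_eq_two_pi_sub_two_mul ?_ ?_ ?_ ?_ (arccos_nonneg _) (arccos_le_pi _) ?_ hlt
  · rw [cos_eq_neg_one_div_of_eq_neg hlam₀.ne' hrL.ne' hβ hβ₁, hca]
  · rw [hsin, hd₁, hsa, neg_div]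
  · rw [cos_eq_neg_one_div_of_eq_neg hlam₀.ne' hrL.ne' hβ hβ₂, hca]
  · rw [hsin, hd₂, hsa]
  · rw [← hw]
    exact div_pos (sub_pos.mpr ht) hrL

/-- For `e = 1` and `λ > 1`, the angle of the `L` segment of a non-trivial
optimal `SLS` path equals `2π − 2 arccos(1/λ)`. -/
theorem SLS_left_turn_angle
    (lam rL μL θ₀ t₁ t₂ : ℝ) (β : ℝ → ℝ)
    (hlam : 1 < lam) (hrL : 0 < rL) (hμL : 0 ≤ μL)
    (hβ : ∀ t, β t = -rL - μL - lam * rL * Real.cos (θ₀ + t / rL))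
    (ht : t₁ < t₂)
    (hβ₁ : β t₁ = -μL) (hβ₂ : β t₂ = -μL)
    (hd₁ : deriv β t₁ = -Real.sqrt (lam ^ 2 - 1))
    (hd₂ : deriv β t₂ = Real.sqrt (lam ^ 2 - 1))
    (hlt : (t₂ - t₁) / rL < 2 * π) :
    (t₂ - t₁) / rL = 2 * π - 2 * Real.arccos (1 / lam) :=
  SLS_left_turn_angle_general lam rL μL θ₀ t₁ t₂ β hlam hrL hβ ht hβ₁ hβ₂ hd₁ hd₂ hlt
end

section
/- Let λ > 1, r_R > 0, μ_R ≥ 0, and θ₀ ∈ ℝ. Define β : ℝ → ℝ by β(t) = r_R + μ_R + λ·r_R·cos(θ₀ − t/r_R). Suppose t₁ < t₂ satisfy β(t₁) = β(t₂) = μ_R, β'(t₁) = √(λ² − 1), β'(t₂) = −√(λ² − 1), and (t₂ − t₁)/r_R < 2π. Then (t₂ − t₁)/r_R = 2π − 2·arccos(1/λ). -/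
/-!
At both inflection points the phase `x = θ₀ - t / r_R` satisfies `cos x = -1/λ`, while
`sin x = ±√(λ² - 1)/λ` with opposite signs. Hence, modulo `2π`, `x₁ ≡ A` and `x₂ ≡ -A` where
`A = arccos (-1/λ) = π - arccos (1/λ)`, so the angle `x₁ - x₂` is `≡ 2A`; both lie in `[0, 2π)`.
-/

open Real

theorem Real.Angle.coe_eq_coe_iff_of_mem_Ico {a x y : ℝ} (hx : x ∈ Set.Ico a (a + 2 * π))
    (hy : y ∈ Set.Ico a (a + 2 * π)) : (x : Angle) = y ↔ x = y :=
  have : Fact (0 < 2 * π) := ⟨two_pi_pos⟩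
  AddCircle.coe_eq_coe_iff_of_mem_Ico hx hy

theorem Real.Angle.sub_eq_two_mul_of_coe_eq_of_coe_eq_neg {x y A : ℝ} (hx : (x : Angle) = A)
    (hy : (y : Angle) = (-A : ℝ)) (hA₀ : 0 ≤ A) (hAπ : A < π) (hxy₀ : 0 ≤ x - y)
    (hxy : x - y < 2 * π) : x - y = 2 * A := by
  refine (coe_eq_coe_iff_of_mem_Ico (a := 0) ⟨hxy₀, by linarith⟩ ⟨by linarith, by linarith⟩).1 ?_
  rw [coe_sub, hx, hy, two_mul, coe_add, coe_neg, sub_neg_eq_add]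

theorem Real.sin_arccos_neg_inv {lam : ℝ} (hlam : 0 < lam) :
    sin (arccos (-lam⁻¹)) = √(lam ^ 2 - 1) / lam := by
  rw [sin_arccos, neg_sq, inv_pow, ← sqrt_sq hlam.le, ← sqrt_div' _ (sq_nonneg lam),
    sqrt_sq hlam.le, sub_div, div_self (pow_pos hlam 2).ne', one_div]

theorem deriv_const_add_mul_cos_sub_div (c a θ₀ : ℝ) {r : ℝ} (hr : r ≠ 0) (t : ℝ) :
    deriv (fun t => c + a * r * cos (θ₀ - t / r)) t = a * sin (θ₀ - t / r) := by
  have hphase : HasDerivAt (fun t => θ₀ - t / r) (-(1 / r)) t := by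
    simpa using ((hasDerivAt_id t).div_const r).const_sub θ₀
  rw [((hphase.cos.const_mul (a * r)).const_add c).deriv]
  field_simp

theorem SRS_right_turn_angle_general
    (lam rR μR θ₀ t₁ t₂ : ℝ) (β : ℝ → ℝ)
    (hlam : 1 < lam) (hrR : 0 < rR)
    (hβ : ∀ t, β t = rR + μR + lam * rR * Real.cos (θ₀ - t / rR))
    (ht : t₁ < t₂)
    (hβ₁ : β t₁ = μR) (hβ₂ : β t₂ = μR)
    (hd₁ : deriv β t₁ = Real.sqrt (lam ^ 2 - 1))
    (hd₂ : deriv β t₂ = -Real.sqrt (lam ^ 2 - 1))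
    (hlt : (t₂ - t₁) / rR < 2 * π) :
    (t₂ - t₁) / rR = 2 * π - 2 * Real.arccos (1 / lam) := by
  have hlam0 : 0 < lam := by linarith
  have hinv : lam⁻¹ < 1 := inv_lt_one_of_one_lt₀ hlam
  set A := arccos (-lam⁻¹)
  have hcosA : cos A = -lam⁻¹ := cos_arccos (by linarith) (by linarith [inv_pos.2 hlam0])
  have hsinA : sin A = √(lam ^ 2 - 1) / lam := sin_arccos_neg_inv hlam0
  have hcos : ∀ t, β t = μR → cos (θ₀ - t / rR) = -lam⁻¹ := fun t h => by
    rw [hβ] at h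
    generalize cos (θ₀ - t / rR) = c at h ⊢
    field_simp
    nlinarith
  have hsin : ∀ t s, deriv β t = s → sin (θ₀ - t / rR) = s / lam := fun t s h => by
    rw [funext hβ, deriv_const_add_mul_cos_sub_div _ _ _ hrR.ne'] at h
    rw [← h, mul_div_cancel_left₀ _ hlam0.ne']
  have h₁ : ((θ₀ - t₁ / rR : ℝ) : Angle) = A :=
    Angle.cos_sin_inj (by rw [hcos t₁ hβ₁, hcosA]) (by rw [hsin t₁ _ hd₁, hsinA])
  have h₂ : ((θ₀ - t₂ / rR : ℝ) : Angle) = (-A : ℝ) :=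
    Angle.cos_sin_inj (by rw [hcos t₂ hβ₂, cos_neg, hcosA])
      (by rw [hsin t₂ _ hd₂, sin_neg, hsinA, neg_div])
  have hpos : 0 < (t₂ - t₁) / rR := div_pos (sub_pos.2 ht) hrR
  rw [show (t₂ - t₁) / rR = (θ₀ - t₁ / rR) - (θ₀ - t₂ / rR) by ring] at hpos hlt ⊢
  rw [Angle.sub_eq_two_mul_of_coe_eq_of_coe_eq_neg h₁ h₂ (arccos_nonneg _)
    (arccos_lt_pi.2 (by linarith)) hpos.le hlt, one_div,
    show A = π - arccos lam⁻¹ from arccos_neg _]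
  ring

/-- For `e = 1` and `λ > 1`, the angle of the `R` segment of a non-trivial
optimal `SRS` path equals `2π − 2 arccos(1/λ)`. -/
theorem SRS_right_turn_angle
    (lam rR μR θ₀ t₁ t₂ : ℝ) (β : ℝ → ℝ)
    (hlam : 1 < lam) (hrR : 0 < rR) (hμR : 0 ≤ μR)
    (hβ : ∀ t, β t = rR + μR + lam * rR * Real.cos (θ₀ - t / rR))
    (ht : t₁ < t₂)
    (hβ₁ : β t₁ = μR) (hβ₂ : β t₂ = μR)
    (hd₁ : deriv β t₁ = Real.sqrt (lam ^ 2 - 1))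
    (hd₂ : deriv β t₂ = -Real.sqrt (lam ^ 2 - 1))
    (hlt : (t₂ - t₁) / rR < 2 * π) :
    (t₂ - t₁) / rR = 2 * π - 2 * Real.arccos (1 / lam) :=
  SRS_right_turn_angle_general lam rR μR θ₀ t₁ t₂ β hlam hrR hβ ht hβ₁ hβ₂ hd₁ hd₂ hlt
end

section
/- For all r_L > 0, r_R > 0, all φ, m, l ∈ ℝ, and every configuration c ∈ ℝ³, applying L_{r_L}(φ), then S(m), then R_{r_R}(φ), then S(l) to c yields exactly the same configuration as applying S(l), then L_{r_L}(φ), then S(m), then R_{r_R}(φ) to c. -/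
open Real

/-- A configuration of a planar Dubins vehicle: position `(x, y)` and heading `α`. -/
abbrev Config := ℝ × ℝ × ℝ

/-- Action of a left-turn arc of radius `r` and angle `φ` on a configuration. -/
noncomputable def leftTurn (r φ : ℝ) (c : Config) : Config :=
  (c.1 + r * (Real.sin (c.2.2 + φ) - Real.sin c.2.2),
   c.2.1 + r * (Real.cos c.2.2 - Real.cos (c.2.2 + φ)),
   c.2.2 + φ)

/-- Action of a right-turn arc of radius `r` and angle `φ` on a configuration. -/
noncomputable def rightTurn (r φ : ℝ) (c : Config) : Config :=
  (c.1 + r * (Real.sin c.2.2 - Real.sin (c.2.2 - φ)),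
   c.2.1 + r * (Real.cos (c.2.2 - φ) - Real.cos c.2.2),
   c.2.2 - φ)

/-- Action of a straight segment of length `l` on a configuration. -/
noncomputable def straight (l : ℝ) (c : Config) : Config :=
  (c.1 + l * Real.cos c.2.2, c.2.1 + l * Real.sin c.2.2, c.2.2)

/-- Applying `L_{r_L}(φ)`, then `S(m)`, then `R_{r_R}(φ)`, then `S(l)` yields
exactly the same configuration as applying `S(l)`, then `L_{r_L}(φ)`, then
`S(m)`, then `R_{r_R}(φ)`: the trailing straight segment of an `LSRS` path with
equal turn angles can be moved to the front. -/
theorem LSRS_eq_SLSR (rL rR : ℝ) (hrL : 0 < rL) (hrR : 0 < rR)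
    (φ m l : ℝ) (c : Config) :
    straight l (rightTurn rR φ (straight m (leftTurn rL φ c))) =
      rightTurn rR φ (straight m (leftTurn rL φ (straight l c))) := by
  simp only [straight, leftTurn, rightTurn, Prod.mk.injEq]
  refine ⟨by ring_nf, by ring_nf, trivial⟩
end
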